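/- Let $(\mathfrak{L},\{\cdot,\cdot,\cdot\})$ be a Leibniz triple system and $a,b\in\mathfrak{L}$. Then the map $D = R_{(b,a)} - R_{(a,b)}$, where $R_{(a,b)}x = \{x,a,b\}$, is a derivation of $\mathfrak{L}$, i.e., $D\{x,y,z\} = \{Dx,y,z\}+\{x,Dy,z\}+\{x,y,Dz\}$ for all $x,y,z\in\mathfrak{L}$. -/

import Mathlib

def IsTrilin (K : Type*) [Field K] {L M : Type*} [AddCommGroup L] [Module K L]
    [AddCommGroup M] [Module K M] (t : L → L → L → M) : Prop :=
  (∀ y z, IsLinearMap K fun x => t x y z) ∧ (∀ x z, IsLinearMap K fun y => t x y z) ∧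
    (∀ x y, IsLinearMap K fun z => t x y z)

def LTSIdent {L : Type*} [AddCommGroup L] (t : L → L → L → L) : Prop :=
  (∀ a b c d e, t a b (t c d e) =
      t (t a b c) d e - t (t a b d) c e - t (t a b e) c d + t (t a b e) d c) ∧
  (∀ a b c d e, t a (t b c d) e =
      t (t a b c) d e - t (t a c b) d e - t (t a d b) c e + t (t a d c) b e)

def IsLTS (K : Type*) [Field K] {L : Type*} [AddCommGroup L] [Module K L]
    (t : L → L → L → L) : Prop := IsTrilin K t ∧ LTSIdent t

def sd {L V : Type*} [AddCommGroup L] [AddCommGroup V]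
    (t : L → L → L → L) (l m r : L → L → V → V) :
    L × V → L × V → L × V → L × V :=
  fun p q s => (t p.1 q.1 s.1, l p.1 q.1 s.2 + m p.1 s.1 q.2 + r q.1 s.1 p.2)

def IsRep (K : Type*) [Field K] {L V : Type*} [AddCommGroup L] [Module K L]
    [AddCommGroup V] [Module K V] (t : L → L → L → L) (l m r : L → L → V → V) : Prop :=
  IsLTS K (sd t l m r)

def IsRRB {K : Type*} [Field K] {L V : Type*} [AddCommGroup L] [Module K L]
    [AddCommGroup V] [Module K V] (t : L → L → L → L) (l m r : L → L → V → V)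
    (T : V →ₗ[K] L) : Prop :=
  ∀ u v w, t (T u) (T v) (T w) =
    T (l (T u) (T v) w + m (T u) (T w) v + r (T v) (T w) u)

def IsRB {K : Type*} [Field K] {L : Type*} [AddCommGroup L] [Module K L]
    (t : L → L → L → L) (R : L →ₗ[K] L) : Prop :=
  ∀ x y z, t (R x) (R y) (R z) =
    R (t (R x) (R y) z + t (R x) y (R z) + t x (R y) (R z))

def IsNij {K : Type*} [Field K] {A : Type*} [AddCommGroup A] [Module K A]
    (t : A → A → A → A) (N : A →ₗ[K] A) : Prop :=
  ∀ x y z, t (N x) (N y) (N z) =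
    N (t (N x) (N y) z) + N (t x (N y) (N z)) + N (t (N x) y (N z))
      - N (N (t (N x) y z)) - N (N (t x (N y) z)) - N (N (t x y (N z)))
      + N (N (N (t x y z)))

/-!
Expanding `{x, y, {z, b, a}}` by the first identity and `{x, {y, b, a}, z}` by the second, and
subtracting the same expansions with `a` and `b` swapped, everything cancels except
`{{x, y, z}, b, a} - {{x, y, z}, a, b}` and `{{x, a, b}, y, z} - {{x, b, a}, y, z}`; the latter is
exactly the term `{D x, y, z}` with its sign reversed.
-/

def IsTripleDerivation {L : Type*} [Add L] (t : L → L → L → L) (D : L → L) : Prop :=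
  ∀ x y z, D (t x y z) = t (D x) y z + t x (D y) z + t x y (D z)

def rightMul {L : Type*} (t : L → L → L → L) (a b : L) : L → L := fun x => t x a b

section
variable {L : Type*} [AddCommGroup L] {t : L → L → L → L}

theorem LTSIdent.rightMul_sub_expand (ht : LTSIdent t) (a b x y z : L) :
    t (t x y z) b a - t (t x y z) a b =
      (t (t x b a) y z - t (t x a b) y z) + (t x (t y b a) z - t x (t y a b) z)
        + (t x y (t z b a) - t x y (t z a b)) := by
  rw [ht.1 x y z b a, ht.1 x y z a b, ht.2 x y b a z, ht.2 x y a b z]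
  abel

theorem IsLTS.isTripleDerivation_rightMul_sub {K : Type*} [Field K] [Module K L]
    (ht : IsLTS K t) (a b : L) : IsTripleDerivation t (rightMul t b a - rightMul t a b) := by
  obtain ⟨⟨hlin₁, hlin₂, hlin₃⟩, hid⟩ := ht
  intro x y z
  simp only [Pi.sub_apply, rightMul]
  rw [(hlin₁ y z).map_sub, (hlin₂ x z).map_sub, (hlin₃ x y).map_sub]
  exact hid.rightMul_sub_expand a b x y z

end

theorem stmt11 {K : Type*} [Field K] {L : Type*} [AddCommGroup L] [Module K L]
    (t : L → L → L → L) (hL : IsLTS K t) (a b : L) :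
    ∀ x y z : L,
      t (t x y z) b a - t (t x y z) a b =
        t (t x b a - t x a b) y z + t x (t y b a - t y a b) z
          + t x y (t z b a - t z a b) :=
  hL.isTripleDerivation_rightMul_sub a b
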